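/- Let μ, υ > -1, 0 < ρ ≤ 1 and let k, r be integers with 0 ≤ k ≤ r. Then for every t ∈ (0,1), D_ρ^k 𝒫_r^{μ,υ,ρ}(t) = d̂_{r,k}^{μ,υ} 𝒫_{r-k}^{μ+k,υ+k,ρ}(t), where d̂_{r,k}^{μ,υ} = Γ(r+k+μ+υ+1)/Γ(r+μ+υ+1). -/

import Mathlib

open Real MeasureTheory Finset

/-- The fractional backward Jacobi function of degree `r` with parameters `μ, υ, ρ`. -/
noncomputable def backJacobi (μ υ ρ : ℝ) (r : ℕ) (t : ℝ) : ℝ :=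
  (Real.Gamma ((r : ℝ) + μ + 1) / ((Nat.factorial r : ℝ) * Real.Gamma ((r : ℝ) + μ + υ + 1))) *
    ∑ k ∈ Finset.range (r + 1),
      (Nat.choose r k : ℝ) * (-1 : ℝ) ^ k *
        (Real.Gamma ((r : ℝ) + (k : ℝ) + μ + υ + 1) / Real.Gamma ((k : ℝ) + μ + 1)) *
        (1 - t) ^ (ρ * (k : ℝ))

/-- The backward transformed derivative D_ρ f(t) = ((1-t)^{1-ρ}/ρ) f'(t). -/
noncomputable def backD (ρ : ℝ) (f : ℝ → ℝ) : ℝ → ℝ :=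
  fun t => (1 - t) ^ (1 - ρ) / ρ * deriv f t

/-!
On `t < 1`, `𝒫_r^{μ,υ,ρ}` is a finite combination of the powers `(1 - t)^{ρk}`, on which
`D_ρ (1 - t)^{ρk} = -k (1 - t)^{ρ(k-1)}`. Comparing coefficients with
`(j + 1) binom(n+1, j+1) = (n + 1) binom(n, j)` and `Γ(x + 1) = x Γ(x)` gives
`D_ρ 𝒫_{n+1}^{μ,υ,ρ} = (n + μ + υ + 2) 𝒫_n^{μ+1,υ+1,ρ}`, and iterating this, the factors
telescope into the Gamma quotient `d̂_{r,k}^{μ,υ}`.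
-/

theorem Real.inv_Gamma_eq_self_mul_inv_Gamma_add_one (s : ℝ) :
    (Gamma s)⁻¹ = s * (Gamma (s + 1))⁻¹ := by
  rcases eq_or_ne s 0 with rfl | hs
  · simp [Real.Gamma_zero]
  · rw [Real.Gamma_add_one hs, ← div_eq_mul_inv, div_mul_cancel_left₀ hs]

theorem hasDerivAt_one_sub_rpow (c : ℝ) {t : ℝ} (ht : t < 1) :
    HasDerivAt (fun s : ℝ => (1 - s) ^ c) (-(c * (1 - t) ^ (c - 1))) t := by
  simpa using ((hasDerivAt_id t).const_sub 1).rpow_const (p := c) (Or.inl (by simp; linarith))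

theorem backD_sum_one_sub_rpow {ρ t : ℝ} (hρ : ρ ≠ 0) (ht : t < 1) (a : ℕ → ℝ) (N : ℕ) :
    backD ρ (fun s => ∑ k ∈ range (N + 1), a k * (1 - s) ^ (ρ * k)) t
      = ∑ j ∈ range N, -((j + 1) * a (j + 1)) * (1 - t) ^ (ρ * j) := by
  have hderiv := HasDerivAt.fun_sum (u := range (N + 1)) fun k _ =>
    (hasDerivAt_one_sub_rpow (ρ * k) ht).const_mul (a k)
  rw [backD, hderiv.deriv, mul_sum, sum_range_succ']
  simp only [CharP.cast_eq_zero, mul_zero, zero_mul, neg_zero, add_zero]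
  refine sum_congr rfl fun j _ => ?_
  have hpow : (1 - t) ^ (1 - ρ) * (1 - t) ^ (ρ * ((j : ℝ) + 1) - 1) = (1 - t) ^ (ρ * j) := by
    rw [← rpow_add (by linarith)]; ring_nf
  push_cast
  rw [← hpow]
  field_simp

noncomputable def backJacobiCoeff (μ υ : ℝ) (r k : ℕ) : ℝ :=
  Gamma ((r : ℝ) + μ + 1) / ((r.factorial : ℝ) * Gamma ((r : ℝ) + μ + υ + 1)) *
    ((r.choose k : ℝ) * (-1) ^ k * (Gamma ((r : ℝ) + k + μ + υ + 1) / Gamma ((k : ℝ) + μ + 1)))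

theorem backJacobi_eq_sum (μ υ ρ : ℝ) (r : ℕ) :
    backJacobi μ υ ρ r =
      fun t => ∑ k ∈ range (r + 1), backJacobiCoeff μ υ r k * (1 - t) ^ (ρ * k) := by
  funext t
  simp only [backJacobi, backJacobiCoeff, mul_sum, mul_assoc]

theorem backJacobiCoeff_succ (μ υ : ℝ) (n j : ℕ) :
    -((j + 1) * backJacobiCoeff μ υ (n + 1) (j + 1))
      = (n + μ + υ + 2) * backJacobiCoeff (μ + 1) (υ + 1) n j := by
  have hbinom : ((n + 1).choose (j + 1) : ℝ) * (j + 1) / ((n + 1).factorial : ℝ)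
      = n.choose j / n.factorial := by
    rw [show ((n + 1).choose (j + 1) : ℝ) * (j + 1) = (n + 1) * n.choose j by
      exact_mod_cast (Nat.add_one_mul_choose_eq n j).symm, Nat.factorial_succ]
    push_cast
    field_simp
  set x : ℝ := n + μ + υ + 2
  set Q : ℝ := (-1) ^ j * Gamma (n + (μ + 1) + 1) * Gamma (n + j + (μ + 1) + (υ + 1) + 1) /
    Gamma (j + (μ + 1) + 1) * (Gamma x)⁻¹
  calc -((j + 1) * backJacobiCoeff μ υ (n + 1) (j + 1))
      = ((n + 1).choose (j + 1) : ℝ) * (j + 1) / ((n + 1).factorial : ℝ) * Q := by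
        simp only [backJacobiCoeff, Q, x]
        push_cast
        ring_nf
    _ = n.choose j / n.factorial * Q := by rw [hbinom]
    _ = (n + μ + υ + 2) * backJacobiCoeff (μ + 1) (υ + 1) n j := by
        simp only [backJacobiCoeff, Q, Real.inv_Gamma_eq_self_mul_inv_Gamma_add_one x, x]
        ring_nf

theorem backD_backJacobi_succ {ρ t : ℝ} (hρ : ρ ≠ 0) (ht : t < 1) (μ υ : ℝ) (n : ℕ) :
    backD ρ (backJacobi μ υ ρ (n + 1)) t = (n + μ + υ + 2) * backJacobi (μ + 1) (υ + 1) ρ n t := by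
  rw [backJacobi_eq_sum, backD_sum_one_sub_rpow hρ ht, backJacobi_eq_sum, mul_sum]
  refine sum_congr rfl fun j _ => ?_
  rw [backJacobiCoeff_succ, mul_assoc]

theorem backD_const_mul_of_eventuallyEq {ρ t c : ℝ} {f g : ℝ → ℝ}
    (h : f =ᶠ[nhds t] fun s => c * g s) :
    backD ρ f t = c * backD ρ g t := by
  rw [backD, backD, h.deriv_eq, deriv_const_mul_field]
  ring

theorem iterate_backD_backJacobi {ρ : ℝ} (hρ : ρ ≠ 0) {μ υ : ℝ} (hμυ : -2 < μ + υ) (k n : ℕ)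
    {t : ℝ} (ht : t < 1) :
    (backD ρ)^[k] (backJacobi μ υ ρ (n + k)) t
      = Gamma (((n + k : ℕ) : ℝ) + k + μ + υ + 1) / Gamma (((n + k : ℕ) : ℝ) + μ + υ + 1) *
          backJacobi (μ + k) (υ + k) ρ n t := by
  induction k generalizing n t with
  | zero =>
    -- when `Γ(n + μ + υ + 1) = 0`, both sides vanish through the junk value `x / 0 = 0`
    rcases eq_or_ne (Gamma ((n : ℝ) + μ + υ + 1)) 0 with hΓ | hΓ
    · simp [backJacobi, hΓ]
    · simp [hΓ]
  | succ k ih =>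
    have hIH : (backD ρ)^[k] (backJacobi μ υ ρ (n + 1 + k)) =ᶠ[nhds t] fun s =>
        Gamma (((n + 1 + k : ℕ) : ℝ) + k + μ + υ + 1) / Gamma (((n + 1 + k : ℕ) : ℝ) + μ + υ + 1) *
          backJacobi (μ + k) (υ + k) ρ (n + 1) s :=
      eventually_lt_nhds ht |>.mono fun s hs => ih (n + 1) hs
    have hx : 0 < (n : ℝ) + 2 * k + μ + υ + 2 := by
      linarith [show (0 : ℝ) ≤ n + 2 * k by positivity]
    rw [Function.iterate_succ_apply', show n + (k + 1) = n + 1 + k by omega,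
      backD_const_mul_of_eventuallyEq hIH, backD_backJacobi_succ hρ ht]
    push_cast
    rw [show (n : ℝ) + 1 + k + (k + 1) + μ + υ + 1 = (n + 2 * k + μ + υ + 2) + 1 by ring,
      Real.Gamma_add_one hx.ne']
    ring_nf

theorem backJacobi_iterated_deriv_general
    (μ υ ρ : ℝ) (hμ : -1 < μ) (hυ : -1 < υ) (hρ0 : 0 < ρ)
    (k r : ℕ) (hkr : k ≤ r) :
    ∀ t ∈ Set.Ioo (0:ℝ) 1,
      (backD ρ)^[k] (backJacobi μ υ ρ r) t
        = (Real.Gamma ((r : ℝ) + (k : ℝ) + μ + υ + 1) / Real.Gamma ((r : ℝ) + μ + υ + 1)) *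
            backJacobi (μ + (k : ℝ)) (υ + (k : ℝ)) ρ (r - k) t := by
  intro t ht
  obtain ⟨n, rfl⟩ := Nat.exists_eq_add_of_le' hkr
  rw [Nat.add_sub_cancel]
  exact iterate_backD_backJacobi hρ0.ne' (by linarith) k n ht.2

/-- Iterated backward transformed derivatives of the backward Jacobi functions:
D_ρ^k 𝒫_r^{μ,υ,ρ} = d̂_{r,k}^{μ,υ} 𝒫_{r-k}^{μ+k,υ+k,ρ}. -/
theorem backJacobi_iterated_deriv
    (μ υ ρ : ℝ) (hμ : -1 < μ) (hυ : -1 < υ) (hρ0 : 0 < ρ) (hρ1 : ρ ≤ 1)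
    (k r : ℕ) (hkr : k ≤ r) :
    ∀ t ∈ Set.Ioo (0:ℝ) 1,
      (backD ρ)^[k] (backJacobi μ υ ρ r) t
        = (Real.Gamma ((r : ℝ) + (k : ℝ) + μ + υ + 1) / Real.Gamma ((r : ℝ) + μ + υ + 1)) *
            backJacobi (μ + (k : ℝ)) (υ + (k : ℝ)) ρ (r - k) t :=
  backJacobi_iterated_deriv_general μ υ ρ hμ hυ hρ0 k r hkr
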